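/- arXiv:1905.02885 — 7 statements merged into one kernel-verified Lean document; each statement's English description precedes it below -/
import Mathlib

section
/- Let λ : R → S be a ring homomorphism, σ a 2-term silting complex of R-modules with cokernel T. If σ ⊗_R S is 2-term silting over S, then the restriction of scalars of T ⊗_R S is generated by T (i.e. is an epimorphic image of a direct sum of copies of T). -/
open TensorProduct

/-- `M` is generated by `T`: `M` is the sum of the images of all maps `T → M`;
equivalently, `M` is an epimorphic image of a direct sum of copies of `T`. -/
def IsGenBy (A T M : Type*) [Ring A] [AddCommGroup T] [AddCommGroup M]
    [Module A T] [Module A M] : Prop :=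
  (⨆ φ : T →ₗ[A] M, LinearMap.range φ) = ⊤

universe u

/-- if `σ : P⁻¹ → P⁰` (projective `R`-modules, cokernel `T`) is a 2-term
silting complex and `σ ⊗_R S` is a 2-term silting complex over `S`, then the restriction
of scalars of `T ⊗_R S` is generated by `T` as an `R`-module. -/
theorem stmt2 {R S : Type u} [CommRing R] [CommRing S] [Algebra R S]
    {P1 P0 T : Type u} [AddCommGroup P1] [AddCommGroup P0] [AddCommGroup T]
    [Module R P1] [Module R P0] [Module R T]
    [Module.Projective R P1] [Module.Projective R P0]
    (σ : P1 →ₗ[R] P0) (π : P0 →ₗ[R] T) (hπ : Function.Surjective π)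
    (hcoker : LinearMap.ker π = LinearMap.range σ)
    -- `σ` is a 2-term silting complex: `D_σ = Gen T`
    (hsilt : ∀ (M : Type u) [AddCommGroup M] [Module R M],
      Function.Surjective (fun f : P0 →ₗ[R] M => f ∘ₗ σ) ↔ IsGenBy R T M)
    -- `σ ⊗_R S` is a 2-term silting complex: `D_{σ ⊗ S} = Gen (T ⊗_R S)`
    (hsiltS : ∀ (M : Type u) [AddCommGroup M] [Module S M],
      Function.Surjective (fun f : (S ⊗[R] P0) →ₗ[S] M => f ∘ₗ σ.baseChange S) ↔
        IsGenBy S (S ⊗[R] T) M) :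
    IsGenBy R T (S ⊗[R] T) := by
  rw [← hsilt (S ⊗[R] T)]
  -- `S ⊗ T` is generated by itself over `S` (via the identity map)
  have hgenS : IsGenBy S (S ⊗[R] T) (S ⊗[R] T) := by
    rw [IsGenBy, eq_top_iff]
    exact le_trans (by simp) (le_iSup _ (LinearMap.id : S ⊗[R] T →ₗ[S] S ⊗[R] T))
  have hsurjS := (hsiltS (S ⊗[R] T)).mpr hgenS
  intro g
  obtain ⟨f', hf'⟩ := hsurjS (g.liftBaseChange S)
  refine ⟨(f'.restrictScalars R) ∘ₗ (TensorProduct.mk R S P0 1), ?_⟩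
  ext p
  have := LinearMap.congr_fun hf' (1 ⊗ₜ[R] p)
  simpa using this
end

section
/- Let R be a commutative ring, 𝔭 a prime ideal, and E(R/𝔭) the injective envelope of R/𝔭. Then for every R-module M there is a natural isomorphism Hom_R(M, κ(𝔭)) ≅ Hom_{R_𝔭}(M ⊗_R κ(𝔭), E(R/𝔭)), where κ(𝔭) is the residue field at 𝔭. -/
/-!
Write `A = R_𝔭` and `κ` for its residue field. Because `ι : κ → E` is essential, every element
of `E` killed by the maximal ideal of `A` lies in the image of `ι`. An `A`-linear map `κ → E` is
determined by the image of `1`, which is killed by the maximal ideal, so `x ↦ (c ↦ ι (c * x))`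
is an isomorphism `κ ≅ Hom_A(κ, E)`. Composing with the tensor-hom adjunction
`Hom_R(M, Hom_A(κ, E)) ≅ Hom_A(κ ⊗_R M, E)` gives the isomorphism.
-/

open TensorProduct

universe u

namespace IsLocalRing

variable {A : Type*} [CommRing A] [IsLocalRing A] {E : Type*} [AddCommGroup E] [Module A E]
  {ι : ResidueField A →ₗ[A] E}

theorem mem_range_of_maximalIdeal_smul_eq_zero
    (hess : ∀ N : Submodule A E, N ≠ ⊥ → N ⊓ LinearMap.range ι ≠ ⊥) {v : E}
    (hv : ∀ r ∈ maximalIdeal A, r • v = 0) : v ∈ LinearMap.range ι := by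
  rcases eq_or_ne v 0 with rfl | hv0
  · exact Submodule.zero_mem _
  have hspan : Submodule.span A {v} ≠ ⊥ := by simpa [Submodule.span_singleton_eq_bot] using hv0
  obtain ⟨w, hw, hw0⟩ := (Submodule.ne_bot_iff _).1 (hess _ hspan)
  obtain ⟨hw_span, hw_range⟩ := Submodule.mem_inf.1 hw
  obtain ⟨r, rfl⟩ := Submodule.mem_span_singleton.1 hw_span
  have hr : IsUnit r := by
    by_contra hr
    exact hw0 (hv r ((mem_maximalIdeal r).2 hr))
  exact (Submodule.smul_mem_iff_of_isUnit _ hr).1 hw_range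

variable (ι) in
noncomputable def residueFieldToHom : ResidueField A →ₗ[A] ResidueField A →ₗ[A] E :=
  ((LinearMap.mul A (ResidueField A)).compr₂ ι).flip

@[simp] theorem residueFieldToHom_apply (x c : ResidueField A) :
    residueFieldToHom ι x c = ι (c * x) := rfl

theorem residueFieldToHom_bijective (hι : Function.Injective ι)
    (hess : ∀ N : Submodule A E, N ≠ ⊥ → N ⊓ LinearMap.range ι ≠ ⊥) :
    Function.Bijective (residueFieldToHom ι) := by
  refine ⟨fun x y hxy => hι ?_, fun φ => ?_⟩
  · simpa using LinearMap.congr_fun hxy 1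
  have h1 : φ 1 ∈ LinearMap.range ι := by
    refine mem_range_of_maximalIdeal_smul_eq_zero hess fun r hr => ?_
    rw [← map_smul, Algebra.smul_def, mul_one, ResidueField.algebraMap_eq,
      (residue_eq_zero_iff r).2 hr, map_zero]
  obtain ⟨x, hx⟩ := h1
  refine ⟨x, LinearMap.ext fun c => ?_⟩
  obtain ⟨a, rfl⟩ := residue_surjective c
  have hc : residue A a = a • (1 : ResidueField A) := Algebra.algebraMap_eq_smul_one a
  rw [residueFieldToHom_apply, hc, smul_mul_assoc, one_mul, map_smul, map_smul, hx]

variable (R M : Type*) [CommRing R] [Algebra R A] [Module R E] [IsScalarTower R A E]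
  [AddCommGroup M] [Module R M]

noncomputable def homResidueFieldEquiv (hι : Function.Injective ι)
    (hess : ∀ N : Submodule A E, N ≠ ⊥ → N ⊓ LinearMap.range ι ≠ ⊥) :
    (M →ₗ[R] ResidueField A) ≃ₗ[R] (ResidueField A ⊗[R] M →ₗ[A] E) :=
  (LinearEquiv.congrRight
      ((LinearEquiv.ofBijective _ (residueFieldToHom_bijective hι hess)).restrictScalars R)).trans
    (LinearMap.lflip.trans (AlgebraTensorModule.lift.equiv R A R _ M E))

theorem homResidueFieldEquiv_apply_tmul (hι : Function.Injective ι)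
    (hess : ∀ N : Submodule A E, N ≠ ⊥ → N ⊓ LinearMap.range ι ≠ ⊥)
    (f : M →ₗ[R] ResidueField A) (c : ResidueField A) (m : M) :
    homResidueFieldEquiv R M hι hess f (c ⊗ₜ m) = ι (c * f m) := rfl

end IsLocalRing

theorem stmt4_general {R : Type u} [CommRing R] (p : Ideal R) [p.IsPrime]
    (E : Type u) [AddCommGroup E] [Module (Localization.AtPrime p) E]
    [Module R E] [IsScalarTower R (Localization.AtPrime p) E]
    (ι : IsLocalRing.ResidueField (Localization.AtPrime p)
      →ₗ[Localization.AtPrime p] E)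
    (hι : Function.Injective ι)
    -- `ι` is an essential extension: `E` is an injective envelope of `κ(𝔭) = E(R/𝔭)`
    (hess : ∀ N : Submodule (Localization.AtPrime p) E, N ≠ ⊥ →
      N ⊓ LinearMap.range ι ≠ ⊥)
    (M : Type u) [AddCommGroup M] [Module R M] :
    ∃ e : (M →ₗ[R] IsLocalRing.ResidueField (Localization.AtPrime p)) ≃ₗ[R]
        ((IsLocalRing.ResidueField (Localization.AtPrime p) ⊗[R] M)
          →ₗ[Localization.AtPrime p] E),
      ∀ (f : M →ₗ[R] IsLocalRing.ResidueField (Localization.AtPrime p))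
        (c : IsLocalRing.ResidueField (Localization.AtPrime p)) (m : M),
        e f (c ⊗ₜ m) = ι (c * f m) :=
  ⟨IsLocalRing.homResidueFieldEquiv R M hι hess,
    IsLocalRing.homResidueFieldEquiv_apply_tmul R M hι hess⟩

/-- for a commutative ring `R`, a prime `𝔭`, and the injective envelope
`E = E(R/𝔭)` of the residue field `κ(𝔭)` over `R_𝔭` (encoded as an injective `R_𝔭`-module
together with an essential embedding `ι : κ(𝔭) → E`), for every `R`-module `M` there is a
natural isomorphism `Hom_R(M, κ(𝔭)) ≅ Hom_{R_𝔭}(M ⊗_R κ(𝔭), E)`, determined by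
`f ↦ (c ⊗ m ↦ ι (c * f m))`. -/
theorem stmt4 {R : Type u} [CommRing R] (p : Ideal R) [p.IsPrime]
    (E : Type u) [AddCommGroup E] [Module (Localization.AtPrime p) E]
    [Module R E] [IsScalarTower R (Localization.AtPrime p) E]
    [Module.Injective (Localization.AtPrime p) E]
    (ι : IsLocalRing.ResidueField (Localization.AtPrime p)
      →ₗ[Localization.AtPrime p] E)
    (hι : Function.Injective ι)
    -- `ι` is an essential extension: `E` is an injective envelope of `κ(𝔭) = E(R/𝔭)`
    (hess : ∀ N : Submodule (Localization.AtPrime p) E, N ≠ ⊥ →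
      N ⊓ LinearMap.range ι ≠ ⊥)
    (M : Type u) [AddCommGroup M] [Module R M] :
    ∃ e : (M →ₗ[R] IsLocalRing.ResidueField (Localization.AtPrime p)) ≃ₗ[R]
        ((IsLocalRing.ResidueField (Localization.AtPrime p) ⊗[R] M)
          →ₗ[Localization.AtPrime p] E),
      ∀ (f : M →ₗ[R] IsLocalRing.ResidueField (Localization.AtPrime p))
        (c : IsLocalRing.ResidueField (Localization.AtPrime p)) (m : M),
        e f (c ⊗ₜ m) = ι (c * f m) :=
  stmt4_general p E ι hι hess M
end

section
/- Let R be a commutative ring, σ : P⁻¹ → P⁰ a map of projective R-modules, and 𝔭 a prime ideal of R. Then Hom_R(σ, κ(𝔭)) is injective (respectively bijective) if and only if σ ⊗_R κ(𝔭) is surjective (respectively bijective), where κ(𝔭) is the residue field at 𝔭. -/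
open TensorProduct

/-- for a commutative ring `R`, a map `σ : P⁻¹ → P⁰` of projective
`R`-modules, and a prime `𝔭`, the map `Hom_R(σ, κ(𝔭))` is injective (resp. bijective)
iff `σ ⊗_R κ(𝔭)` is surjective (resp. bijective). -/
theorem stmt5 {R : Type*} [CommRing R]
    {P1 P0 : Type*} [AddCommGroup P1] [AddCommGroup P0] [Module R P1] [Module R P0]
    [Module.Projective R P1] [Module.Projective R P0]
    (σ : P1 →ₗ[R] P0) (p : Ideal R) [p.IsPrime] :
    (Function.Injective
        (fun f : P0 →ₗ[R] IsLocalRing.ResidueField (Localization.AtPrime p) => f ∘ₗ σ) ↔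
      Function.Surjective
        (σ.baseChange (IsLocalRing.ResidueField (Localization.AtPrime p)))) ∧
    (Function.Bijective
        (fun f : P0 →ₗ[R] IsLocalRing.ResidueField (Localization.AtPrime p) => f ∘ₗ σ) ↔
      Function.Bijective
        (σ.baseChange (IsLocalRing.ResidueField (Localization.AtPrime p)))) := by
  set k := IsLocalRing.ResidueField (Localization.AtPrime p)
  let e0 : (P0 →ₗ[R] k) ≃ₗ[k] (k ⊗[R] P0 →ₗ[k] k) := LinearMap.liftBaseChangeEquiv k
  let e1 : (P1 →ₗ[R] k) ≃ₗ[k] (k ⊗[R] P1 →ₗ[k] k) := LinearMap.liftBaseChangeEquiv k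
  have key : ∀ f : P0 →ₗ[R] k,
      (σ.baseChange k).dualMap (e0 f) = e1 (f ∘ₗ σ) := by
    intro f
    ext x
    simp [e0, e1, LinearMap.dualMap_apply]
  have hcomp : (fun f : P0 →ₗ[R] k => f ∘ₗ σ) =
      e1.symm ∘ (σ.baseChange k).dualMap ∘ e0 := by
    funext f
    rw [Function.comp_apply, Function.comp_apply, key, LinearEquiv.symm_apply_apply]
  constructor
  · rw [hcomp]
    rw [Function.Injective.of_comp_iff e1.symm.injective,
      Function.Injective.of_comp_iff' _ e0.bijective,
      LinearMap.dualMap_injective_iff]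
  · rw [hcomp]
    rw [Function.Bijective.of_comp_iff' e1.symm.bijective,
      Function.Bijective.of_comp_iff _ e0.bijective,
      LinearMap.dualMap_bijective_iff]
end

section
/- Let δ : R → B be an epimorphism in the category of rings with R commutative. Then B is commutative, the induced map Spec(B) → Spec(R) is injective, and for every prime 𝔮 of B the induced map of residue fields κ(δ^{-1}(𝔮)) → κ(𝔮) is an isomorphism. -/
/-
An epimorphism `δ : R → B` cannot separate the ring maps `b ↦ b` and `b ↦ b + ε [b, c]` into the
square-zero extension `B ⊕ εB`, which agree on `R` as soon as `c` commutes with `δ R`; hence the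
centralizer of `δ R` is central, and since `R` is commutative, `B` is commutative.

For `B` commutative and a prime `q` over `p`, the composite `R → B → κ(q)` is again an
epimorphism, because `B → κ(q)` is one; it factors through `κ(p)`, so the field extension
`κ(p) → κ(q)` is an epimorphism, i.e. `s ⊗ 1 = 1 ⊗ s` in `κ(q) ⊗ κ(q)`, which forces
`κ(q) = κ(p)` by faithful flatness. Consequently every prime `q` over `p` is the kernel of a map
`B → κ(p)` extending `R → κ(p)`, and the epimorphism property makes that map unique.
-/

universe u

/-- The induced homomorphism of residue fields `κ(δ⁻¹(q)) → κ(q)` associated to a ring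
homomorphism `δ : R → B` and a prime `q` of `B`. -/
noncomputable def residueFieldMap {R B : Type u} [CommRing R] [CommRing B] (δ : R →+* B)
    (q : Ideal B) [q.IsPrime] :
    IsLocalRing.ResidueField (Localization.AtPrime (q.comap δ)) →+*
      IsLocalRing.ResidueField (Localization.AtPrime q) :=
  haveI := Localization.isLocalHom_localRingHom (q.comap δ) q δ rfl
  IsLocalRing.ResidueField.map (Localization.localRingHom (q.comap δ) q δ rfl)

open TensorProduct nonZeroDivisors

theorem Algebra.IsEpi.surjective_algebraMap_of_faithfullyFlat {R A : Type*} [CommRing R]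
    [Ring A] [Algebra R A] [Module.FaithfullyFlat R A] [Algebra.IsEpi R A] :
    Function.Surjective (algebraMap R A) := by
  intro a
  let π := (LinearMap.range (Algebra.linearMap R A)).mkQ
  have hπ1 : π 1 = 0 := (Submodule.Quotient.mk_eq_zero _).2 ⟨1, by simp⟩
  have h : (1 : A) ⊗ₜ[R] π a = 0 := by
    simpa [hπ1] using
      congr(LinearMap.lTensor A π $((Algebra.isEpi_iff_forall_one_tmul_eq R A).1 ‹_› a))
  rw [Module.FaithfullyFlat.one_tmul_eq_zero_iff, Submodule.mkQ_apply,
    Submodule.Quotient.mk_eq_zero] at h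
  exact h

def TrivSqZeroExt.innerDerivationHom {B : Type u} [Ring B] (c : B) :
    B →+* TrivSqZeroExt B B where
  toFun b := ⟨b, b * c - c * b⟩
  map_one' := by ext <;> simp
  map_zero' := by ext <;> simp
  map_mul' x y := by
    ext
    · rfl
    · show x * y * c - c * (x * y) = x * (y * c - c * y) + (x * c - c * x) * y
      noncomm_ring
  map_add' x y := by
    ext
    · rfl
    · show (x + y) * c - c * (x + y) = (x * c - c * x) + (y * c - c * y)
      noncomm_ring

namespace RingHom

/-- Unlike for `Algebra.IsEpi`, the test rings `C` need not be commutative. -/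
def IsEpi {R B : Type u} [Ring R] [Ring B] (δ : R →+* B) : Prop :=
  ∀ (C : Type u) [Ring C] (f g : B →+* C), f.comp δ = g.comp δ → f = g

namespace IsEpi

variable {R S T : Type u} [Ring R] [Ring S] [Ring T] {f : R →+* S} {g : S →+* T}

theorem comp (hg : g.IsEpi) (hf : f.IsEpi) : (g.comp f).IsEpi :=
  fun C _ a b h => hg C a b (hf C _ _ h)

theorem of_comp (h : (g.comp f).IsEpi) : g.IsEpi :=
  fun C _ a b hab => h C a b (by rw [← comp_assoc, hab, comp_assoc])

theorem commute_of_forall_commute (hf : f.IsEpi) {c : S} (hc : ∀ r, Commute (f r) c) (b : S) :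
    Commute b c := by
  have hfg : (TrivSqZeroExt.inlHom S S).comp f = (TrivSqZeroExt.innerDerivationHom c).comp f := by
    ext r
    · rfl
    · exact (sub_eq_zero.2 (hc r).eq).symm
  have hsnd := congr(($(hf _ _ _ hfg) b).snd)
  exact sub_eq_zero.1 hsnd.symm

theorem mul_comm {R B : Type u} [CommRing R] [Ring B] {δ : R →+* B} (hδ : δ.IsEpi) (x y : B) :
    x * y = y * x :=
  have central (r : R) (b : B) : Commute (δ r) b :=
    (hδ.commute_of_forall_commute (fun r' => (Commute.all r' r).map δ) b).symm
  (hδ.commute_of_forall_commute (fun r => central r y) x).eq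

theorem algebraIsEpi {A B : Type u} [CommRing A] [CommRing B] [Algebra A B]
    (h : (algebraMap A B).IsEpi) : Algebra.IsEpi A B := by
  have key := h (B ⊗[A] B) Algebra.TensorProduct.includeRight.toRingHom
    Algebra.TensorProduct.includeLeftRingHom
    (RingHom.ext fun a => (Algebra.TensorProduct.tmul_one_eq_one_tmul a).symm)
  exact (Algebra.isEpi_iff_forall_one_tmul_eq A B).2 fun b => RingHom.congr_fun key b

end IsEpi

theorem isEpi_algebraMap_residueField {B : Type u} [CommRing B] (q : Ideal B) [q.IsPrime] :
    (algebraMap B q.ResidueField).IsEpi :=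
  fun _ _ _ _ h => IsLocalization.ringHom_ext (B ⧸ q)⁰ (Ideal.Quotient.ringHom_ext h)

end RingHom

theorem residueFieldMap_comp_algebraMap {R B : Type u} [CommRing R] [CommRing B] (δ : R →+* B)
    (q : Ideal B) [q.IsPrime] :
    (residueFieldMap δ q).comp (algebraMap R (q.comap δ).ResidueField) =
      (algebraMap B q.ResidueField).comp δ :=
  RingHom.ext (Ideal.ResidueField.map_algebraMap _ _ δ rfl)

namespace RingHom.IsEpi

variable {R B : Type u} [CommRing R] [CommRing B] {δ : R →+* B}

theorem bijective_residueFieldMap (hδ : δ.IsEpi) (q : Ideal B) [q.IsPrime] :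
    Function.Bijective (residueFieldMap δ q) := by
  let := (residueFieldMap δ q).toAlgebra
  have hepi : (residueFieldMap δ q).IsEpi := by
    refine of_comp (f := algebraMap R (q.comap δ).ResidueField) ?_
    rw [residueFieldMap_comp_algebraMap]
    exact (RingHom.isEpi_algebraMap_residueField q).comp hδ
  have := algebraIsEpi hepi
  exact ⟨RingHom.injective _, Algebra.IsEpi.surjective_algebraMap_of_faithfullyFlat⟩

theorem exists_residueField_lift (hδ : δ.IsEpi) (q : Ideal B) [q.IsPrime]
    (p : Ideal R) [p.IsPrime] (hqp : q.comap δ = p) :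
    ∃ φ : B →+* p.ResidueField, φ.comp δ = algebraMap R p.ResidueField ∧ RingHom.ker φ = q := by
  subst hqp
  let e := RingEquiv.ofBijective _ (hδ.bijective_residueFieldMap q)
  refine ⟨(e.symm : q.ResidueField →+* _).comp (algebraMap B q.ResidueField), ?_, ?_⟩
  · ext r
    rw [RingHom.comp_apply, RingHom.comp_apply, ← RingHom.comp_apply (algebraMap B _),
      ← residueFieldMap_comp_algebraMap, RingHom.comp_apply]
    exact e.symm_apply_apply (algebraMap R _ r)
  · rw [RingHom.ker_comp_of_injective _ e.symm.injective, Ideal.ker_algebraMap_residueField]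

theorem injective_comap (hδ : δ.IsEpi) : Function.Injective (PrimeSpectrum.comap δ) := by
  intro q₁ q₂ h
  obtain ⟨φ₁, hφ₁, hker₁⟩ := hδ.exists_residueField_lift q₁.asIdeal _ rfl
  obtain ⟨φ₂, hφ₂, hker₂⟩ := hδ.exists_residueField_lift q₂.asIdeal (q₁.asIdeal.comap δ)
    congr(PrimeSpectrum.asIdeal $h).symm
  have hφ : φ₁ = φ₂ := hδ _ _ _ (hφ₁.trans hφ₂.symm)
  exact PrimeSpectrum.ext (hker₁.symm.trans (hφ ▸ hker₂))

end RingHom.IsEpi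

/-- if `δ : R → B` is an epimorphism of rings with `R` commutative, then
`B` is commutative, `Spec(B) → Spec(R)` is injective, and for every prime `q` of `B` the
induced map of residue fields `κ(δ⁻¹(q)) → κ(q)` is an isomorphism (the last two
statements being phrased for epimorphisms into commutative rings, as provided by the
first part). -/
theorem stmt10 {R B : Type u} [CommRing R] [Ring B] (δ : R →+* B)
    (hepi : ∀ (C : Type u) [Ring C] (f g : B →+* C), f.comp δ = g.comp δ → f = g) :
    (∀ x y : B, x * y = y * x) ∧
    (∀ (B' : Type u) [CommRing B'] (δ' : R →+* B'),
      (∀ (C : Type u) [Ring C] (f g : B' →+* C), f.comp δ' = g.comp δ' → f = g) →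
      Function.Injective (PrimeSpectrum.comap δ') ∧
      ∀ (q : Ideal B') [q.IsPrime], Function.Bijective (residueFieldMap δ' q)) :=
  ⟨RingHom.IsEpi.mul_comm hepi, fun _ _ _ hepi' =>
    ⟨RingHom.IsEpi.injective_comap hepi', RingHom.IsEpi.bijective_residueFieldMap hepi'⟩⟩
end

section
/- Let R be commutative, σ : P⁻¹ → P⁰ a map of projective R-modules with cokernel T, I an ideal such that V(I) ⊆ {𝔭 : σ ⊗_R κ(𝔭) not injective} and T ⊗_R (R/I) = 0. Then the short exact sequence 0 → Ker(σ ⊗ R/I) → P⁻¹ ⊗ R/I → P⁰ ⊗ R/I → 0 splits, Ker(σ ⊗ R/I) is a projective R/I-module, and Ker(σ ⊗ R/I) ⊗_{R/I} κ(𝔭) ≠ 0 for all primes 𝔭 ⊇ I; hence Ker(σ ⊗_R R/I) is a projective generator of Mod-R/I. -/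
/-!
Right exactness of `R/I ⊗ -` and `R/I ⊗ T = 0` make `σ ⊗ R/I` surjective; its target is
projective, so it splits and its kernel `K` is a direct summand of `P⁻¹ ⊗ R/I`, hence projective.
If `κ(𝔭) ⊗ K` vanished for a prime `𝔭` of `R/I`, right exactness again would make `σ ⊗ κ(𝔭)`
injective, and, `P⁻¹` being flat, so would be `σ ⊗ κ(𝔮)` for the preimage `𝔮 ∈ V(I)` of `𝔭`,
since `κ(𝔮)` embeds in `κ(𝔭)`. Finally a projective module with nonzero fibres has trace ideal
the whole ring: otherwise the trace lies in a maximal ideal `𝔪`, every coordinate of a dual basis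
vanishes in `κ(𝔪)`, and so does the fibre at `𝔪`.
-/

open TensorProduct

universe u

section IsGenBy

variable {A T S M : Type*} [Ring A] [AddCommGroup T] [AddCommGroup S] [AddCommGroup M]
  [Module A T] [Module A S] [Module A M]

theorem isGenBy_ring : IsGenBy A A M :=
  Submodule.eq_top_iff'.mpr fun y ↦
    Submodule.mem_iSup_of_mem (LinearMap.toSpanSingleton A M y) ⟨1, by simp⟩

theorem IsGenBy.trans (hTS : IsGenBy A T S) (hSM : IsGenBy A S M) : IsGenBy A T M := by
  rw [IsGenBy, eq_top_iff, ← hSM]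
  refine iSup_le fun ψ ↦ ?_
  rw [← Submodule.map_top, ← hTS, Submodule.map_iSup]
  refine iSup_le fun φ ↦ ?_
  rw [← LinearMap.range_comp]
  exact le_iSup (fun χ : T →ₗ[A] M ↦ LinearMap.range χ) (ψ ∘ₗ φ)

end IsGenBy

theorem Module.Projective.subsingleton_tensor_of_algebraMap_dual_eq_zero
    {A B P : Type*} [CommRing A] [CommRing B] [Algebra A B]
    [AddCommGroup P] [Module A P] [Module.Projective A P]
    (h : ∀ (f : P →ₗ[A] A) (x : P), algebraMap A B (f x) = 0) :
    Subsingleton (B ⊗[A] P) := by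
  obtain ⟨s, hs⟩ := Module.projective_def'.mp ‹Module.Projective A P›
  have htmul : ∀ (c : B) (x : P), c ⊗ₜ[A] x = 0 := by
    intro c x
    have hx : (s x).sum (fun e a ↦ a • e) = x := by
      simpa [Finsupp.linearCombination_apply] using LinearMap.congr_fun hs x
    rw [← hx, Finsupp.sum, tmul_sum]
    refine Finset.sum_eq_zero fun e _ ↦ ?_
    have hcoord : algebraMap A B (s x e) = 0 := h (Finsupp.lapply e ∘ₗ s) x
    rw [tmul_smul, smul_tmul', Algebra.smul_def, hcoord, zero_mul, zero_tmul]
  refine subsingleton_of_forall_eq 0 fun z ↦ ?_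
  induction z using TensorProduct.induction_on with
  | zero => rfl
  | tmul c x => exact htmul c x
  | add x y hx hy => rw [hx, hy, add_zero]

/-- `IsGenBy A P A` says that the trace ideal of `P` is all of `A`. -/
theorem Module.Projective.isGenBy_self_of_nontrivial_residueField_tensor
    {A P : Type*} [CommRing A] [AddCommGroup P] [Module A P] [Module.Projective A P]
    (h : ∀ p : PrimeSpectrum A, Nontrivial (p.asIdeal.ResidueField ⊗[A] P)) :
    IsGenBy A P A := by
  by_contra htrace
  obtain ⟨m, hm, hle⟩ := Ideal.exists_le_maximal _ htrace
  have := h ⟨m, hm.isPrime⟩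
  refine not_subsingleton (m.ResidueField ⊗[A] P)
    (subsingleton_tensor_of_algebraMap_dual_eq_zero fun f x ↦ ?_)
  exact Ideal.algebraMap_residueField_eq_zero.mpr
    (hle (Submodule.mem_iSup_of_mem f (LinearMap.mem_range_self f x)))

theorem Module.Projective.isGenBy_of_nontrivial_residueField_tensor
    {A P : Type*} [CommRing A] [AddCommGroup P] [Module A P] [Module.Projective A P]
    (h : ∀ p : PrimeSpectrum A, Nontrivial (p.asIdeal.ResidueField ⊗[A] P))
    (M : Type*) [AddCommGroup M] [Module A M] : IsGenBy A P M :=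
  (isGenBy_self_of_nontrivial_residueField_tensor h).trans isGenBy_ring

section Tensor

variable {R M N P : Type*} [CommRing R] [AddCommGroup M] [AddCommGroup N] [AddCommGroup P]
  [Module R M] [Module R N] [Module R P]

theorem LinearMap.surjective_lTensor_of_exact {f : M →ₗ[R] N} {g : N →ₗ[R] P}
    (hfg : Function.Exact f g) (hg : Function.Surjective g)
    (Q : Type*) [AddCommGroup Q] [Module R Q] [Subsingleton (Q ⊗[R] P)] :
    Function.Surjective (f.lTensor Q) :=
  fun y ↦ (lTensor_exact Q hfg hg y).mp (Subsingleton.elim _ _)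

theorem LinearMap.injective_lTensor_of_subsingleton_lTensor_ker (g : N →ₗ[R] P)
    (hg : Function.Surjective g) (Q : Type*) [AddCommGroup Q] [Module R Q]
    [Subsingleton (Q ⊗[R] LinearMap.ker g)] :
    Function.Injective (g.lTensor Q) := by
  rw [← LinearMap.ker_eq_bot, (lTensor_exact Q g.exact_subtype_ker_map hg).linearMap_ker_eq]
  exact LinearMap.range_eq_bot.mpr (Subsingleton.elim _ _)

theorem LinearMap.injective_lTensor_of_injective_lTensor [Module.Flat R M] (f : M →ₗ[R] N)
    {A B : Type*} [AddCommGroup A] [AddCommGroup B] [Module R A] [Module R B]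
    {j : A →ₗ[R] B} (hj : Function.Injective j) (h : Function.Injective (f.lTensor B)) :
    Function.Injective (f.lTensor A) := by
  have hcomm : f.lTensor B ∘ₗ j.rTensor M = j.rTensor N ∘ₗ f.lTensor A := by
    rw [lTensor_comp_rTensor, rTensor_comp_lTensor]
  have hinj := h.comp (Module.Flat.rTensor_preserves_injective_linearMap j hj)
  rw [← LinearMap.coe_comp, hcomm, LinearMap.coe_comp] at hinj
  exact hinj.of_comp

theorem LinearMap.injective_baseChange_baseChange_iff {A B : Type*} [CommRing A] [CommRing B]
    [Algebra R A] [Algebra R B] [Algebra A B] [IsScalarTower R A B] (f : M →ₗ[R] N) :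
    Function.Injective ((f.baseChange A).baseChange B) ↔ Function.Injective (f.baseChange B) := by
  rw [baseChange_baseChange, LinearMap.coe_comp, LinearMap.coe_comp, LinearEquiv.coe_coe,
    LinearEquiv.coe_coe, EquivLike.comp_injective, EquivLike.injective_comp]

end Tensor

theorem Module.Projective.ker_of_comp_eq_id {S V W : Type*} [Ring S] [AddCommGroup V]
    [AddCommGroup W] [Module S V] [Module S W] [Module.Projective S V]
    (f : V →ₗ[S] W) (s : W →ₗ[S] V) (hs : f ∘ₗ s = LinearMap.id) :
    Module.Projective S (LinearMap.ker f) := by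
  have hfs : ∀ y, f (s y) = y := LinearMap.congr_fun hs
  refine .of_split (LinearMap.ker f).subtype
    ((LinearMap.id - s ∘ₗ f).codRestrict (LinearMap.ker f) fun x ↦ by simp [hfs]) ?_
  ext ⟨x, hx⟩
  simp [LinearMap.mem_ker.mp hx]

theorem nontrivial_residueField_tensor_ker_baseChange_quotient {R P1 P0 : Type*} [CommRing R]
    [AddCommGroup P1] [AddCommGroup P0] [Module R P1] [Module R P0] [Module.Flat R P1]
    (σ : P1 →ₗ[R] P0) (I : Ideal R)
    (hV : ∀ p : PrimeSpectrum R, I ≤ p.asIdeal →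
      ¬ Function.Injective (σ.baseChange p.asIdeal.ResidueField))
    (hsurj : Function.Surjective (σ.baseChange (R ⧸ I))) (p : PrimeSpectrum (R ⧸ I)) :
    Nontrivial (p.asIdeal.ResidueField ⊗[R ⧸ I] LinearMap.ker (σ.baseChange (R ⧸ I))) := by
  let q := PrimeSpectrum.comap (algebraMap R (R ⧸ I)) p
  have hIq : I ≤ q.asIdeal := fun a ha ↦ by
    simp [q, Ideal.Quotient.eq_zero_iff_mem.mpr ha]
  refine not_subsingleton_iff_nontrivial.mp fun hK ↦ hV q hIq ?_
  have hp : Function.Injective (σ.baseChange p.asIdeal.ResidueField) := by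
    rw [← LinearMap.injective_baseChange_baseChange_iff (A := R ⧸ I),
      LinearMap.baseChange_eq_ltensor]
    exact (σ.baseChange (R ⧸ I)).injective_lTensor_of_subsingleton_lTensor_ker hsurj _
  let j := Ideal.ResidueField.mapₐ q.asIdeal p.asIdeal (Ideal.Quotient.mkₐ R I) rfl
  rw [LinearMap.baseChange_eq_ltensor] at hp ⊢
  exact σ.injective_lTensor_of_injective_lTensor (j := j.toLinearMap) j.injective hp

/-- let `σ : P⁻¹ → P⁰` (projective `R`-modules) have cokernel `T`, and let
`I` be an ideal with `V(I) ⊆ {p : σ ⊗ κ(p) not injective}` and `T ⊗_R R/I = 0`.  Then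
`σ ⊗ R/I` is a split epimorphism, its kernel is a projective `R/I`-module with
`Ker(σ ⊗ R/I) ⊗ κ(p) ≠ 0` for all primes `p` of `R/I`, and `Ker(σ ⊗ R/I)` is a
(projective) generator of `Mod-R/I`. -/
theorem stmt13 {R : Type u} [CommRing R]
    {P1 P0 T : Type u} [AddCommGroup P1] [AddCommGroup P0] [AddCommGroup T]
    [Module R P1] [Module R P0] [Module R T]
    [Module.Projective R P1] [Module.Projective R P0]
    (σ : P1 →ₗ[R] P0) (π : P0 →ₗ[R] T) (hπ : Function.Surjective π)
    (hcoker : LinearMap.ker π = LinearMap.range σ)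
    (I : Ideal R)
    (hV : ∀ p : PrimeSpectrum R, I ≤ p.asIdeal →
      ¬ Function.Injective (σ.baseChange
        (IsLocalRing.ResidueField (Localization.AtPrime p.asIdeal))))
    (hT : Subsingleton ((R ⧸ I) ⊗[R] T)) :
    (∃ s : ((R ⧸ I) ⊗[R] P0) →ₗ[R ⧸ I] ((R ⧸ I) ⊗[R] P1),
      σ.baseChange (R ⧸ I) ∘ₗ s = LinearMap.id) ∧
    Module.Projective (R ⧸ I) (LinearMap.ker (σ.baseChange (R ⧸ I))) ∧
    (∀ p : PrimeSpectrum (R ⧸ I),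
      Nontrivial ((IsLocalRing.ResidueField (Localization.AtPrime p.asIdeal))
        ⊗[R ⧸ I] (LinearMap.ker (σ.baseChange (R ⧸ I))))) ∧
    (∀ (M : Type u) [AddCommGroup M] [Module (R ⧸ I) M],
      IsGenBy (R ⧸ I) (LinearMap.ker (σ.baseChange (R ⧸ I))) M) := by
  have hsurj : Function.Surjective (σ.baseChange (R ⧸ I)) := by
    rw [LinearMap.baseChange_eq_ltensor]
    exact LinearMap.surjective_lTensor_of_exact (LinearMap.exact_iff.mpr hcoker) hπ _
  obtain ⟨s, hs⟩ := Module.projective_lifting_property _ LinearMap.id hsurj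
  have hproj := Module.Projective.ker_of_comp_eq_id _ s hs
  have hfib := nontrivial_residueField_tensor_ker_baseChange_quotient σ I hV hsurj
  exact ⟨⟨s, hs⟩, hproj, hfib, Module.Projective.isGenBy_of_nontrivial_residueField_tensor hfib⟩
end

section
/- Let R be a commutative ring and σ : P⁻¹ → P⁰ a homomorphism of projective R-modules with cokernel T. If σ, viewed as a two-term complex, is a generator of the derived category D(R), then for every prime 𝔭 of R either T ⊗_R κ(𝔭) ≠ 0 or Ker(σ ⊗_R κ(𝔭)) ≠ 0, i.e. σ ⊗_R κ(𝔭) is not an isomorphism. -/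
/-!
If `σ ⊗ κ(𝔭)` were an isomorphism with `T ⊗ κ(𝔭) = 0`, then, since `Hom_R(P, κ(𝔭))` is naturally
`Hom_{κ(𝔭)}(κ(𝔭) ⊗ P, κ(𝔭))`, the map `Hom_R(σ, κ(𝔭))` would be bijective; the generator
hypothesis applied to the nonzero module `κ(𝔭)` forbids this.
-/

open TensorProduct

namespace LinearMap

section liftBaseChange

variable {R A M N Q : Type*} [CommSemiring R] [CommSemiring A] [Algebra R A]
  [AddCommMonoid M] [AddCommMonoid N] [AddCommMonoid Q] [Module R M] [Module R N]
  [Module R Q] [Module A Q] [IsScalarTower R A Q]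

theorem liftBaseChange_comp_baseChange (g : N →ₗ[R] Q) (f : M →ₗ[R] N) :
    (g ∘ₗ f).liftBaseChange A = g.liftBaseChange A ∘ₗ f.baseChange A := by
  ext
  simp

theorem bijective_comp_right_of_bijective_baseChange (f : M →ₗ[R] N)
    (hf : Function.Bijective (f.baseChange A)) :
    Function.Bijective (fun g : N →ₗ[R] Q => g ∘ₗ f) := by
  let e := LinearEquiv.ofBijective (f.baseChange A) hf
  have hconj : (fun g : N →ₗ[R] Q => g ∘ₗ f) =
      (liftBaseChangeEquiv A).symm ∘ (e.arrowCongr (LinearEquiv.refl A Q)).symm ∘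
        liftBaseChangeEquiv A := by
    funext g
    apply (liftBaseChangeEquiv A).injective
    ext x
    simp [liftBaseChange_comp_baseChange, e]
  rw [hconj]
  exact (LinearEquiv.bijective _).comp ((LinearEquiv.bijective _).comp (LinearEquiv.bijective _))

end liftBaseChange

theorem surjective_baseChange_of_exact {R A M N T : Type*} [CommRing R] [CommRing A]
    [Algebra R A] [AddCommGroup M] [AddCommGroup N] [AddCommGroup T] [Module R M]
    [Module R N] [Module R T] {f : M →ₗ[R] N} {g : N →ₗ[R] T} (hfg : Function.Exact f g)
    (hg : Function.Surjective g) [Subsingleton (A ⊗[R] T)] :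
    Function.Surjective (f.baseChange A) :=
  (surjective_iff_eq_zero_of_exact (lTensor_exact A hfg hg)).mpr (Subsingleton.elim _ _)

end LinearMap

theorem stmt16_general {R : Type u} [CommRing R]
    {P1 P0 T : Type u} [AddCommGroup P1] [AddCommGroup P0] [AddCommGroup T]
    [Module R P1] [Module R P0] [Module R T]
    (σ : P1 →ₗ[R] P0) (π : P0 →ₗ[R] T) (hπ : Function.Surjective π)
    (hcoker : LinearMap.ker π = LinearMap.range σ)
    -- `σ` is a generator of `D(R)`: no nonzero module `M` has
    -- `Hom_{D(R)}(σ, M[i]) = 0` for all `i`; equivalently `Hom_R(σ, M)` is not bijective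
    (hgen : ∀ (M : Type u) [AddCommGroup M] [Module R M], Nontrivial M →
      ¬ Function.Bijective (fun f : P0 →ₗ[R] M => f ∘ₗ σ)) :
    ∀ p : PrimeSpectrum R,
      Nontrivial ((IsLocalRing.ResidueField (Localization.AtPrime p.asIdeal)) ⊗[R] T) ∨
      LinearMap.ker (σ.baseChange
        (IsLocalRing.ResidueField (Localization.AtPrime p.asIdeal))) ≠ ⊥ := by
  intro p
  set κ := IsLocalRing.ResidueField (Localization.AtPrime p.asIdeal)
  by_contra! h
  obtain ⟨hT, hker⟩ := h
  have hbij : Function.Bijective (σ.baseChange κ) :=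
    ⟨LinearMap.ker_eq_bot.mp hker,
      LinearMap.surjective_baseChange_of_exact (LinearMap.exact_iff.mpr hcoker) hπ⟩
  exact hgen κ inferInstance (LinearMap.bijective_comp_right_of_bijective_baseChange σ hbij)

/-- let `σ : P⁻¹ → P⁰` (projective `R`-modules, cokernel `T`) be a
generator of the derived category `D(R)`.  For a two-term complex of projectives, being
a generator means exactly that for every nonzero `R`-module `M` some
`Hom_{D(R)}(σ, M[i]) = Hom_{K(R)}(σ, M[i])` is nonzero, i.e. the map
`Hom_R(σ, M) : Hom(P⁰, M) → Hom(P⁻¹, M)` is not an isomorphism (this is the form of the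
hypothesis used below).  Then for every prime `𝔭`, `T ⊗_R κ(𝔭) ≠ 0` or
`Ker(σ ⊗_R κ(𝔭)) ≠ 0`, i.e. `σ ⊗_R κ(𝔭)` is not an isomorphism. -/
theorem stmt16 {R : Type u} [CommRing R]
    {P1 P0 T : Type u} [AddCommGroup P1] [AddCommGroup P0] [AddCommGroup T]
    [Module R P1] [Module R P0] [Module R T]
    [Module.Projective R P1] [Module.Projective R P0]
    (σ : P1 →ₗ[R] P0) (π : P0 →ₗ[R] T) (hπ : Function.Surjective π)
    (hcoker : LinearMap.ker π = LinearMap.range σ)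
    -- `σ` is a generator of `D(R)`: no nonzero module `M` has
    -- `Hom_{D(R)}(σ, M[i]) = 0` for all `i`; equivalently `Hom_R(σ, M)` is not bijective
    (hgen : ∀ (M : Type u) [AddCommGroup M] [Module R M], Nontrivial M →
      ¬ Function.Bijective (fun f : P0 →ₗ[R] M => f ∘ₗ σ)) :
    ∀ p : PrimeSpectrum R,
      Nontrivial ((IsLocalRing.ResidueField (Localization.AtPrime p.asIdeal)) ⊗[R] T) ∨
      LinearMap.ker (σ.baseChange
        (IsLocalRing.ResidueField (Localization.AtPrime p.asIdeal))) ≠ ⊥ :=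
  stmt16_general σ π hπ hcoker hgen
end

section
/- Let λ : ℤ → ℚ be the inclusion and σ : F⁻¹ → F⁰ a free resolution of ℚ as a ℤ-module (so coker σ ≅ ℚ, σ injective). Then there exists a nonzero abelian group G with Ext¹_ℤ(ℚ, G) = 0 and Hom_ℤ(ℚ, G) = 0 (e.g. any nonzero finite abelian group); consequently D_σ = Ker Ext¹_ℤ(ℚ, −) strictly contains Gen(ℚ), so σ is not a 2-term silting complex. -/
lemma zmod2_zsmul_self (c : ZMod 2) : (2 : ℤ) • c = 0 := by revert c; decide

/-- Auxiliary: for any ℤ-module `G` killed by 2, `Hom(σ, G)` is surjective. -/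
lemma stmt18_surj {F1 F0 G : Type} [AddCommGroup F1] [AddCommGroup F0]
    [Module ℤ F1] [instF0 : Module ℤ F0] [AddCommGroup G] [instG : Module ℤ G]
    (hG2 : ∀ c : G, (2 : ℤ) • c = 0)
    (σ : F1 →ₗ[ℤ] F0) (hσ : Function.Injective σ)
    (π : F0 →ₗ[ℤ] ℚ) (hπ : Function.Surjective π)
    (hker : LinearMap.ker π = LinearMap.range σ) :
    Function.Surjective (fun f : F0 →ₗ[ℤ] G => f ∘ₗ σ) := by
  haveI : Unique (Module ℤ F0) := AddCommGroup.uniqueIntModule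
  haveI : Unique (Module ℤ G) := AddCommGroup.uniqueIntModule
  obtain rfl : instF0 = AddCommGroup.toIntModule F0 := Subsingleton.elim _ _
  obtain rfl : instG = AddCommGroup.toIntModule G := Subsingleton.elim _ _
  intro g
  -- every x ∈ F0 can be written as 2•y + σ a (divisibility of ℚ)
  have hex : ∀ x : F0, ∃ p : F0 × F1, x = (2 : ℤ) • p.1 + σ p.2 := by
    intro x
    obtain ⟨y, hy⟩ := hπ (π x / 2)
    have hx : x - (2 : ℤ) • y ∈ LinearMap.ker π := by
      rw [LinearMap.mem_ker, map_sub, map_zsmul, hy, zsmul_eq_mul]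
      push_cast
      ring
    rw [hker] at hx
    obtain ⟨a, ha⟩ := hx
    refine ⟨(y, a), ?_⟩
    show x = (2 : ℤ) • y + σ a
    rw [ha]
    abel
  -- well-definedness of `g` on such decompositions (torsion-freeness of ℚ)
  have hwd : ∀ (y y' : F0) (a a' : F1),
      (2 : ℤ) • y + σ a = (2 : ℤ) • y' + σ a' → g a = g a' := by
    intro y y' a a' h
    have h1 : σ (a - a') = (2 : ℤ) • (y' - y) := by
      rw [map_sub, zsmul_sub, sub_eq_sub_iff_add_eq_add, add_comm (σ a)]
      exact h
    have h2 : (2 : ℤ) • π (y' - y) = 0 := by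
      rw [← map_zsmul, ← h1]
      have hm : σ (a - a') ∈ LinearMap.ker π := by
        rw [hker]; exact ⟨a - a', rfl⟩
      exact hm
    have h3 : y' - y ∈ LinearMap.ker π := by
      rw [zsmul_eq_mul] at h2
      rw [LinearMap.mem_ker]
      push_cast at h2
      linarith
    rw [hker] at h3
    obtain ⟨b, hb⟩ := h3
    have h4 : a - a' = (2 : ℤ) • b := by
      apply hσ
      rw [h1, map_zsmul, hb]
    have h5 : g a - g a' = 0 := by
      rw [← map_sub, h4, map_zsmul, hG2]
    exact sub_eq_zero.mp h5
  choose p hp using hex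
  set q : F0 → G := fun x => g (p x).2 with hq
  have hadd : ∀ x x' : F0, q (x + x') = q x + q x' := by
    intro x x'
    have key : (2 : ℤ) • (p (x + x')).1 + σ (p (x + x')).2
        = (2 : ℤ) • ((p x).1 + (p x').1) + σ ((p x).2 + (p x').2) := by
      rw [← hp (x + x'), zsmul_add, map_add]
      conv_lhs => rw [hp x, hp x']
      abel
    show g (p (x + x')).2 = g (p x).2 + g (p x').2
    rw [hwd _ _ _ _ key, map_add]
  refine ⟨(AddMonoidHom.mk' q hadd).toIntLinearMap, ?_⟩
  ext a
  show q (σ a) = g a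
  apply hwd (p (σ a)).1 0
  rw [← hp (σ a), zsmul_zero, zero_add]

/-- let `σ : F⁻¹ → F⁰` be a free resolution of `ℚ` over `ℤ`.  Then there
is a nonzero abelian group `G` with `Ext¹_ℤ(ℚ, G) = 0` (equivalently, since `σ` is an
injective resolution of `ℚ` by projectives, `Hom(σ, G)` is surjective, i.e. `G ∈ D_σ`)
and `Hom_ℤ(ℚ, G) = 0`; consequently `D_σ` strictly contains `Gen ℚ`, so `σ` is not a
2-term silting complex. -/
theorem stmt18 {F1 F0 : Type} [AddCommGroup F1] [AddCommGroup F0]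
    [Module ℤ F1] [Module ℤ F0] [Module.Free ℤ F1] [Module.Free ℤ F0]
    (σ : F1 →ₗ[ℤ] F0) (hσ : Function.Injective σ)
    (π : F0 →ₗ[ℤ] ℚ) (hπ : Function.Surjective π)
    (hker : LinearMap.ker π = LinearMap.range σ) :
    (∃ (G : Type) (_ : AddCommGroup G) (_ : Module ℤ G), Nontrivial G ∧
      Function.Surjective (fun f : F0 →ₗ[ℤ] G => f ∘ₗ σ) ∧
      (∀ f : ℚ →ₗ[ℤ] G, f = 0)) ∧
    ¬ (∀ (X : Type) [AddCommGroup X] [Module ℤ X],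
        Function.Surjective (fun f : F0 →ₗ[ℤ] X => f ∘ₗ σ) → IsGenBy ℤ ℚ X) := by
  have hsurj : Function.Surjective (fun f : F0 →ₗ[ℤ] ZMod 2 => f ∘ₗ σ) :=
    stmt18_surj zmod2_zsmul_self σ hσ π hπ hker
  have hhom : ∀ f : ℚ →ₗ[ℤ] ZMod 2, f = 0 := by
    intro f
    ext x
    have hx : x = (2 : ℤ) • (x / 2) := by rw [zsmul_eq_mul]; push_cast; ring
    rw [LinearMap.zero_apply, hx, map_zsmul, zmod2_zsmul_self]
  constructor
  · exact ⟨ZMod 2, inferInstance, inferInstance, inferInstance, hsurj, hhom⟩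
  · intro h
    have hgen := h (ZMod 2) hsurj
    unfold IsGenBy at hgen
    have hbot : (⨆ φ : ℚ →ₗ[ℤ] ZMod 2, LinearMap.range φ) = ⊥ := by
      simp only [iSup_eq_bot]
      intro φ
      rw [hhom φ, LinearMap.range_zero]
    rw [hbot] at hgen
    exact absurd hgen (bot_ne_top : (⊥ : Submodule ℤ (ZMod 2)) ≠ ⊤)
end
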